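/- If f is the CDF of N(0, σ²), then -σ²·log(1 - f(x)) is asymptotic to x²/2 as x → ∞; that is, lim_{x→∞} (-σ²·log(1 - f(x)))/(x²/2) = 1. -/

import Mathlib

/-!
The tail `1 - Φ y` is squeezed between `φ (y + 1)` and Mills' bound `φ y / y`, so taking logarithms
`-log (1 - Φ y) = y² / 2 + O(y)`; the scaling `y = x / σ` turns this into the claim.
-/

open Real Filter

noncomputable def stdNormalPDF (t : ℝ) : ℝ := (Real.sqrt (2 * Real.pi))⁻¹ * Real.exp (-t ^ 2 / 2)

noncomputable def stdNormalCDF (x : ℝ) : ℝ := ∫ t in Set.Iic x, stdNormalPDF t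

open MeasureTheory Set Asymptotics ProbabilityTheory

lemma stdNormalPDF_eq_gaussianPDFReal : stdNormalPDF = gaussianPDFReal 0 1 := by
  ext t
  simp [stdNormalPDF, gaussianPDFReal]

lemma stdNormalPDF_pos (t : ℝ) : 0 < stdNormalPDF t := by
  rw [stdNormalPDF_eq_gaussianPDFReal]
  exact gaussianPDFReal_pos _ _ _ one_ne_zero

lemma integrable_stdNormalPDF : Integrable stdNormalPDF :=
  stdNormalPDF_eq_gaussianPDFReal ▸ integrable_gaussianPDFReal 0 1

lemma one_sub_stdNormalCDF (y : ℝ) : 1 - stdNormalCDF y = ∫ t in Ioi y, stdNormalPDF t := by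
  have htotal : ∫ t, stdNormalPDF t = 1 := by
    rw [stdNormalPDF_eq_gaussianPDFReal]
    exact integral_gaussianPDFReal_eq_one 0 one_ne_zero
  rw [← htotal, ← intervalIntegral.integral_Iic_add_Ioi integrable_stdNormalPDF.integrableOn
    integrable_stdNormalPDF.integrableOn, stdNormalCDF, add_sub_cancel_left]

lemma log_stdNormalPDF (t : ℝ) : log (stdNormalPDF t) = -(t ^ 2 / 2) - log √(2 * π) := by
  rw [stdNormalPDF, log_mul (by positivity) (exp_ne_zero _), log_inv, log_exp]
  ring

lemma one_sub_stdNormalCDF_le {y : ℝ} (hy : 0 < y) : 1 - stdNormalCDF y ≤ stdNormalPDF y / y := by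
  set c := (√(2 * π))⁻¹ * exp (y ^ 2 / 2)
  -- `-t²/2 ≤ y²/2 - y t` is `(t - y)² ≥ 0`
  have hpointwise (t : ℝ) : stdNormalPDF t ≤ c * exp (-y * t) := by
    rw [stdNormalPDF, mul_assoc, ← exp_add]
    gcongr
    nlinarith [sq_nonneg (t - y)]
  calc 1 - stdNormalCDF y
      ≤ ∫ t in Ioi y, c * exp (-y * t) := by
        rw [one_sub_stdNormalCDF]
        exact setIntegral_mono integrable_stdNormalPDF.integrableOn
          ((integrableOn_exp_mul_Ioi (neg_lt_zero.2 hy) y).const_mul c) hpointwise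
    _ = stdNormalPDF y / y := by
        rw [integral_const_mul, integral_exp_mul_Ioi (neg_lt_zero.2 hy), neg_div_neg_eq,
          mul_assoc, mul_div_assoc', ← exp_add, stdNormalPDF]
        ring_nf

lemma stdNormalPDF_add_one_le_one_sub_stdNormalCDF {y : ℝ} (hy : 0 ≤ y) :
    stdNormalPDF (y + 1) ≤ 1 - stdNormalCDF y := by
  have hmono : ∀ t ∈ Ioc y (y + 1), stdNormalPDF (y + 1) ≤ stdNormalPDF t := by
    rintro t ⟨hyt, hty⟩
    unfold stdNormalPDF
    gcongr
    nlinarith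
  calc stdNormalPDF (y + 1)
      = ∫ _ in Ioc y (y + 1), stdNormalPDF (y + 1) := by simp
    _ ≤ ∫ t in Ioc y (y + 1), stdNormalPDF t :=
        setIntegral_mono_on (by simp) integrable_stdNormalPDF.integrableOn measurableSet_Ioc hmono
    _ ≤ ∫ t in Ioi y, stdNormalPDF t :=
        setIntegral_mono_set integrable_stdNormalPDF.integrableOn
          (ae_of_all _ fun t => (stdNormalPDF_pos t).le) Ioc_subset_Ioi_self.eventuallyLE
    _ = 1 - stdNormalCDF y := (one_sub_stdNormalCDF y).symm

lemma neg_log_one_sub_stdNormalCDF_le {y : ℝ} (hy : 0 ≤ y) :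
    -log (1 - stdNormalCDF y) ≤ (y + 1) ^ 2 / 2 + log √(2 * π) := by
  have h := log_le_log (stdNormalPDF_pos _) (stdNormalPDF_add_one_le_one_sub_stdNormalCDF hy)
  rw [log_stdNormalPDF] at h
  linarith

lemma le_neg_log_one_sub_stdNormalCDF {y : ℝ} (hy : 1 ≤ y) :
    y ^ 2 / 2 + log √(2 * π) ≤ -log (1 - stdNormalCDF y) := by
  have hy₀ : 0 < y := by linarith
  have htail_pos : 0 < 1 - stdNormalCDF y :=
    (stdNormalPDF_pos _).trans_le (stdNormalPDF_add_one_le_one_sub_stdNormalCDF hy₀.le)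
  have h := log_le_log htail_pos (one_sub_stdNormalCDF_le hy₀)
  rw [log_div (stdNormalPDF_pos y).ne' hy₀.ne', log_stdNormalPDF] at h
  linarith [log_nonneg hy]

lemma isBigO_neg_log_one_sub_stdNormalCDF_sub :
    (fun y => -log (1 - stdNormalCDF y) - y ^ 2 / 2) =O[atTop] fun y => y := by
  refine IsBigO.of_bound (|log √(2 * π)| + 2) ?_
  filter_upwards [eventually_ge_atTop 1] with y hy
  have hlower := le_neg_log_one_sub_stdNormalCDF hy
  have hupper := neg_log_one_sub_stdNormalCDF_le (zero_le_one.trans hy)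
  rw [norm_eq_abs, norm_eq_abs, abs_of_nonneg (zero_le_one.trans hy), abs_le]
  constructor <;> nlinarith [abs_nonneg (log √(2 * π)), neg_abs_le (log √(2 * π)),
    le_abs_self (log √(2 * π))]

lemma isEquivalent_neg_log_one_sub_stdNormalCDF :
    (fun y => -log (1 - stdNormalCDF y)) ~[atTop] fun y => y ^ 2 / 2 := by
  refine isBigO_neg_log_one_sub_stdNormalCDF_sub.trans_isLittleO ?_
  simpa [div_eq_mul_inv, mul_comm] using
    (isLittleO_pow_pow_atTop_of_lt (𝕜 := ℝ) one_lt_two).const_mul_right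
      (c := (2 : ℝ)⁻¹) (by norm_num)

/-- If `f` is the CDF of `N(0, σ²)`, then `-σ² log(1 - f(x)) ~ x²/2` as `x → ∞`. -/
theorem stmt12 (σ : ℝ) (hσ : 0 < σ) (f : ℝ → ℝ) (hf : ∀ x, f x = stdNormalCDF (x / σ)) :
    Tendsto (fun x => (-σ ^ 2 * Real.log (1 - f x)) / (x ^ 2 / 2)) atTop (nhds 1) := by
  have hscaled := (IsEquivalent.refl (u := fun _ => σ ^ 2)).mul
    (isEquivalent_neg_log_one_sub_stdNormalCDF.comp_tendsto (tendsto_id.atTop_div_const hσ))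
  have hequiv : (fun x => -σ ^ 2 * log (1 - f x)) ~[atTop] fun x => x ^ 2 / 2 := by
    convert hscaled using 1 <;> funext x
    · simp [hf]
    · simp only [Pi.mul_apply, Function.comp_apply, id]
      field_simp
  exact (isEquivalent_iff_tendsto_one (eventually_ne_atTop 0 |>.mono fun x hx => by positivity)).mp
    hequiv
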